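/- arXiv:math/0510222 — 3 statements merged into one kernel-verified Lean document; each statement's English description precedes it below -/
import Mathlib

section
/- For all x, a in R, N(x)·a = N(j'_x(a)) + h'_x(T(a)), i.e., N(x)·a = N(x·t(a)) + h'_x(T(a)). -/
/-! For an arbitrary ring automorphism `t` the identity holds with `t` replaced by `(t ^ (n - 1))⁻¹`,
by induction on `n`: the row `i = n - 1` of the double sum telescopes against the change of the
first sum. When `t ^ n = 1` this inverse is `t` itself. -/

namespace RingAut

variable {R : Type*} [Ring R] (t : RingAut R)

theorem inv_pow_succ_apply_apply (m : ℕ) (a : R) : (t ^ (m + 1))⁻¹ (t a) = (t ^ m)⁻¹ a := by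
  rw [pow_succ', mul_inv_rev, mul_apply, inv_apply t, RingEquiv.symm_apply_apply]

theorem sum_pow_apply_mul_eq (m : ℕ) (x a : R) :
    (∑ i ∈ Finset.range (m + 1), (t ^ i) x) * a =
      (∑ i ∈ Finset.range (m + 1), (t ^ i) (x * (t ^ m)⁻¹ a)) +
        ∑ i ∈ Finset.Ico 1 (m + 1), ∑ k ∈ Finset.range i, (t ^ k) (x * (t ^ i)⁻¹ (t a - a)) := by
  induction m with
  | zero => simp
  | succ m ih =>
    have hsplit : ∑ k ∈ Finset.range (m + 1), (t ^ k) (x * (t ^ (m + 1))⁻¹ (t a - a)) =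
        (∑ k ∈ Finset.range (m + 1), (t ^ k) (x * (t ^ m)⁻¹ a)) -
          ∑ k ∈ Finset.range (m + 1), (t ^ k) (x * (t ^ (m + 1))⁻¹ a) := by
      simp only [map_sub, mul_sub, inv_pow_succ_apply_apply, Finset.sum_sub_distrib]
    have htop : (t ^ (m + 1)) (x * (t ^ (m + 1))⁻¹ a) = (t ^ (m + 1)) x * a := by
      rw [map_mul, inv_apply, RingEquiv.apply_symm_apply]
    rw [Finset.sum_range_succ, add_mul, ih,
      Finset.sum_Ico_succ_top (a := 1) (b := m + 1) (by omega), hsplit,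
      Finset.sum_range_succ _ (m + 1), htop]
    abel

end RingAut

theorem stmt7_general (R : Type*) [Ring R] (t : RingAut R) (n : ℕ)
    (htn : t ^ n = 1) (x a : R) :
    (∑ i ∈ Finset.range n, (t ^ i) x) * a = (∑ i ∈ Finset.range n, (t ^ i) (x * t a)) + (∑ i ∈ Finset.Ico 1 n, ∑ k ∈ Finset.range i, (t ^ k) (x * ((t ^ i)⁻¹) (t a - a))) := by
  cases n with
  | zero => simp
  | succ m =>
    have hinv : (t ^ m)⁻¹ = t := inv_eq_of_mul_eq_one_left (by rwa [pow_succ'] at htn)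
    simpa only [hinv] using t.sum_pow_apply_mul_eq m x a

theorem stmt7 (R : Type*) [Ring R] (t : RingAut R) (n : ℕ) (hn : 2 ≤ n)
    (htn : t ^ n = 1) (x a : R) :
    (∑ i ∈ Finset.range n, (t ^ i) x) * a = (∑ i ∈ Finset.range n, (t ^ i) (x * t a)) + (∑ i ∈ Finset.Ico 1 n, ∑ k ∈ Finset.range i, (t ^ k) (x * ((t ^ i)⁻¹) (t a - a))) :=
  stmt7_general R t n htn x a
end

section
/- For all x, a in R, N(x)·a = j'_x(N(a)) + T(h'_x(a)), i.e., N(x)·a = x·t(N(a)) + T(h'_x(a)). -/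
/-!
Since `(t - 1)(1 + t + ⋯ + t ^ (i - 1)) = t ^ i - 1`, the term `T (h'_x a)` telescopes to
`∑ i < n, (t ^ i x * a - x * t ^ (-i) a)` (the summand for `i = 0` vanishes). As `t ^ n = 1`, the
`t ^ (-i) a` sum to `t (N a)`, so these terms cancel against `x * t (N a)`, leaving `N x * a`.
-/

open Finset

namespace RingAut

variable {R : Type*} [NonUnitalNonAssocRing R] (t : RingAut R)

theorem pow_succ_apply' (k : ℕ) (y : R) : (t ^ (k + 1)) y = t ((t ^ k) y) := by
  rw [pow_succ', mul_apply]

theorem pow_apply_comm (k : ℕ) (y : R) : (t ^ k) (t y) = t ((t ^ k) y) := by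
  rw [← mul_apply, ← pow_succ, pow_succ_apply']

theorem apply_sum_range_pow_sub (i : ℕ) (y : R) :
    t (∑ k ∈ range i, (t ^ k) y) - ∑ k ∈ range i, (t ^ k) y = (t ^ i) y - y := by
  simp only [map_sum, ← pow_succ_apply', ← sum_sub_distrib]
  simpa using sum_range_sub (fun k ↦ (t ^ k) y) i

theorem apply_sum_sum_range_pow_sub (s : Finset ℕ) (f : ℕ → R) :
    t (∑ i ∈ s, ∑ k ∈ range i, (t ^ k) (f i)) - ∑ i ∈ s, ∑ k ∈ range i, (t ^ k) (f i) =
      ∑ i ∈ s, ((t ^ i) (f i) - f i) := by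
  rw [map_sum, ← sum_sub_distrib]
  exact sum_congr rfl fun i _ ↦ apply_sum_range_pow_sub t i (f i)

/- From `t ^ n = 1`: `(t ^ i)⁻¹ = t ^ (n - 1 - i) * t` for `i < n`, and `i ↦ n - 1 - i` permutes
`range n`. -/
theorem sum_range_inv_pow_apply {n : ℕ} (htn : t ^ n = 1) (a : R) :
    ∑ i ∈ range n, ((t ^ i)⁻¹) a = t (∑ i ∈ range n, (t ^ i) a) := by
  have hinv : ∀ i ∈ range n, (t ^ i)⁻¹ = t ^ (n - 1 - i) * t := by
    intro i hi
    refine inv_eq_of_mul_eq_one_right ?_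
    rw [← pow_succ, ← pow_add, ← htn]
    congr 1
    have := mem_range.mp hi
    omega
  rw [sum_congr rfl fun i hi ↦ by rw [hinv i hi, mul_apply], sum_range_reflect
    (fun j ↦ (t ^ j) (t a)) n, map_sum]
  exact sum_congr rfl fun j _ ↦ pow_apply_comm t j a

end RingAut

open RingAut in
theorem stmt8_general (R : Type*) [Ring R] (t : RingAut R) (n : ℕ)
    (htn : t ^ n = 1) (x a : R) :
    (∑ i ∈ Finset.range n, (t ^ i) x) * a = x * t (∑ i ∈ Finset.range n, (t ^ i) a) + (t (∑ i ∈ Finset.Ico 1 n, ∑ k ∈ Finset.range i, (t ^ k) (x * ((t ^ i)⁻¹) a)) - (∑ i ∈ Finset.Ico 1 n, ∑ k ∈ Finset.range i, (t ^ k) (x * ((t ^ i)⁻¹) a))) := by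
  have hpow_apply_mul_inv : ∀ i, (t ^ i) (x * ((t ^ i)⁻¹) a) = (t ^ i) x * a := fun i ↦ by
    rw [map_mul, ← mul_apply, mul_inv_cancel, one_apply]
  have hsum_Ico_eq_range : ∑ i ∈ Ico 1 n, ((t ^ i) x * a - x * ((t ^ i)⁻¹) a) =
      ∑ i ∈ range n, ((t ^ i) x * a - x * ((t ^ i)⁻¹) a) := by
    refine sum_subset (fun i hi ↦ mem_range.mpr (mem_Ico.mp hi).2) fun i hi hi' ↦ ?_
    obtain rfl : i = 0 := by simp only [mem_range, mem_Ico] at hi hi'; omega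
    simp
  rw [apply_sum_sum_range_pow_sub]
  simp only [hpow_apply_mul_inv]
  rw [hsum_Ico_eq_range, ← sum_range_inv_pow_apply t htn, mul_sum, sum_sub_distrib, sum_mul]
  abel

theorem stmt8 (R : Type*) [Ring R] (t : RingAut R) (n : ℕ) (hn : 2 ≤ n)
    (htn : t ^ n = 1) (x a : R) :
    (∑ i ∈ Finset.range n, (t ^ i) x) * a = x * t (∑ i ∈ Finset.range n, (t ^ i) a) + (t (∑ i ∈ Finset.Ico 1 n, ∑ k ∈ Finset.range i, (t ^ k) (x * ((t ^ i)⁻¹) a)) - (∑ i ∈ Finset.Ico 1 n, ∑ k ∈ Finset.range i, (t ^ k) (x * ((t ^ i)⁻¹) a))) :=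
  stmt8_general R t n htn x a
end

section
/- If x ∈ R satisfies N(x) = 1, then j_x ∘ N + T ∘ h_x = id_R, i.e., for all a ∈ R, x·N(a) + T(h_x(a)) = a. -/
/-!
Put `F i = tⁱ(x) · (1 + t + ⋯ + tⁱ⁻¹)(a)`, so that `h_x(a) = -∑_{i<n} F i` (the term `F 0` vanishes).
Since `t (F i) = F (i + 1) - tⁱ⁺¹(x) · a`, applying `T` to `∑_{i<n} F i` telescopes to
`F n - F 0 - t(N x) · a = x · N(a) - a`, using `tⁿ = 1` and `N(x) = 1`.
-/

open Finset

namespace RingAut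

variable {R : Type*} [Ring R] (t : RingAut R)

theorem apply_pow_apply (i : ℕ) (y : R) : t ((t ^ i) y) = (t ^ (i + 1)) y := by
  rw [pow_succ', mul_apply]

theorem apply_pow_mul_sum_range (x a : R) (i : ℕ) :
    t ((t ^ i) x * ∑ k ∈ range i, (t ^ k) a)
      = (t ^ (i + 1)) x * ∑ k ∈ range (i + 1), (t ^ k) a - (t ^ (i + 1)) x * a := by
  rw [map_mul, map_sum, sum_range_succ', apply_pow_apply, pow_zero, one_apply, mul_add,
    add_sub_cancel_right]
  simp only [apply_pow_apply]

theorem apply_sum_sub_sum_eq (x a : R) (n : ℕ) :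
    t (∑ i ∈ range n, (t ^ i) x * ∑ k ∈ range i, (t ^ k) a)
        - ∑ i ∈ range n, (t ^ i) x * ∑ k ∈ range i, (t ^ k) a
      = (t ^ n) x * ∑ k ∈ range n, (t ^ k) a - t (∑ i ∈ range n, (t ^ i) x) * a := by
  have hshift : t (∑ i ∈ range n, (t ^ i) x) = ∑ i ∈ range n, (t ^ (i + 1)) x := by
    rw [map_sum]
    simp only [apply_pow_apply]
  set F : ℕ → R := fun i ↦ (t ^ i) x * ∑ k ∈ range i, (t ^ k) a
  have hterm (i : ℕ) : t (F i) - F i = (F (i + 1) - F i) - (t ^ (i + 1)) x * a := by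
    simp only [F, apply_pow_mul_sum_range]
    abel
  rw [map_sum, ← sum_sub_distrib, sum_congr rfl fun i _ ↦ hterm i, sum_sub_distrib,
    sum_range_sub, hshift, sum_mul]
  simp [F]

end RingAut

theorem sum_Ico_one_eq_sum_range {M : Type*} [AddCommMonoid M] (f : ℕ → M) (hf : f 0 = 0)
    (n : ℕ) : ∑ i ∈ Ico 1 n, f i = ∑ i ∈ range n, f i := by
  refine sum_subset (fun i hi ↦ mem_range.2 (mem_Ico.1 hi).2) fun i _ hi ↦ ?_
  obtain rfl : i = 0 := by simp_all
  exact hf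

theorem stmt11_general (R : Type*) [Ring R] (t : RingAut R) (n : ℕ)
    (htn : t ^ n = 1) (x : R) (hx : (∑ i ∈ Finset.range n, (t ^ i) x) = 1) :
    ∀ a : R, x * (∑ i ∈ Finset.range n, (t ^ i) a) + (t (-∑ i ∈ Finset.Ico 1 n, (t ^ i) x * ∑ k ∈ Finset.range i, (t ^ k) a) - (-∑ i ∈ Finset.Ico 1 n, (t ^ i) x * ∑ k ∈ Finset.range i, (t ^ k) a)) = a := by
  intro a
  rw [sum_Ico_one_eq_sum_range _ (by simp), map_neg, neg_sub_neg]
  have hT := t.apply_sum_sub_sum_eq x a n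
  rw [htn, RingAut.one_apply, hx, map_one, one_mul] at hT
  rw [← neg_sub, hT]
  abel

theorem stmt11 (R : Type*) [Ring R] (t : RingAut R) (n : ℕ) (hn : 2 ≤ n)
    (htn : t ^ n = 1) (x : R) (hx : (∑ i ∈ Finset.range n, (t ^ i) x) = 1) :
    ∀ a : R, x * (∑ i ∈ Finset.range n, (t ^ i) a) + (t (-∑ i ∈ Finset.Ico 1 n, (t ^ i) x * ∑ k ∈ Finset.range i, (t ^ k) a) - (-∑ i ∈ Finset.Ico 1 n, (t ^ i) x * ∑ k ∈ Finset.range i, (t ^ k) a)) = a :=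
  stmt11_general R t n htn x hx
end
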